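/- arXiv:2402.08350 — 5 statements merged into one kernel-verified Lean document; each statement's English description precedes it below -/
import Mathlib

section
/- Let σ ∈ 𝔖_s and 1 ≤ d ≤ r ≤ n. If 𝐈 ∈ Intersecting(r,n,s)^σ and 𝐉 ∈ Intersecting(d,r,s)^σ, then the composition 𝐈𝐉 belongs to Intersecting(d,n,s)^σ. -/
open Module

noncomputable section

/-- A complete flag on `ℂ^m`: an increasing family of subspaces with
`dim (F i) = i + 1` (`0`-based indexing, so `F i` is the `i+1`-st step). -/
structure Flagg (m : ℕ) where
  F : Fin m → Submodule ℂ (Fin m → ℂ)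
  mono : Monotone F
  rank_eq : ∀ i : Fin m, finrank ℂ (F i) = (i : ℕ) + 1

/-- An `s`-tuple `J` of (strictly increasing) maps `[d] → [r]` is *intersecting* if
for every `s`-tuple of complete flags on `ℂ^r` the corresponding intersection of
Schubert varieties in the Grassmannian `Gr(d, ℂ^r)` is nonempty. -/
def Intersecting {s d r : ℕ} (J : Fin s → Fin d → Fin r) : Prop :=
  ∀ F : Fin s → Flagg r, ∃ V : Submodule ℂ (Fin r → ℂ), finrank ℂ V = d ∧
    ∀ (l : Fin s) (k : Fin d), (k : ℕ) + 1 ≤ finrank ℂ ↥(V ⊓ (F l).F (J l k))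

/-- `dim I = ∑_j (I(j) - j)`. -/
def dimI {d r : ℕ} (J : Fin d → Fin r) : ℤ := ∑ k, ((J k : ℤ) - (k : ℤ))

/-- Expected dimension of a tuple `J ∈ Subsets(d,r,s)`. -/
def edim {s d r : ℕ} (J : Fin s → Fin d → Fin r) : ℤ :=
  (d : ℤ) * ((r : ℤ) - (d : ℤ)) - ∑ l, ((d : ℤ) * ((r : ℤ) - (d : ℤ)) - dimI (J l))

/-- `dim` for raw `ℕ`-valued increasing sequences. -/
def dimN {d : ℕ} (f : Fin d → ℕ) : ℤ := ∑ k, ((f k : ℤ) - (k : ℤ))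

/-- Expected dimension for raw `ℕ`-valued tuples, with ambient dimension `n` explicit. -/
def edimN {s d : ℕ} (n : ℕ) (f : Fin s → Fin d → ℕ) : ℤ :=
  (d : ℤ) * ((n : ℤ) - (d : ℤ)) - ∑ l, ((d : ℤ) * ((n : ℤ) - (d : ℤ)) - dimN (f l))

/-- `T(Λ) = ∑_l ∑_j Λ_l(j)`. -/
def TT {s r : ℕ} (Λ : Fin s → Fin r → ℝ) : ℝ := ∑ l, ∑ j, Λ l j

/-- `T_J(Λ) = ∑_l ∑_{j ∈ J_l} Λ_l(j)`. -/
def TJ {s d r : ℕ} (J : Fin s → Fin d → Fin r) (Λ : Fin s → Fin r → ℝ) : ℝ :=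
  ∑ l, ∑ k, Λ l (J l k)

/-- `Γ(J)_l(k) = k - J_l(k) + (r - d)`, a weakly decreasing real `d`-tuple. -/
def GammaT {s d r : ℕ} (J : Fin s → Fin d → Fin r) : Fin s → Fin d → ℝ :=
  fun l k => (k : ℝ) - (J l k : ℝ) + ((r : ℝ) - (d : ℝ))

/-- Membership of `(Λ, t)` in the Kirwan cone `𝒦(r,s)`: each `Λ_l` is weakly
decreasing and there are Hermitian matrices `A_1, …, A_s` summing to `t·I_r`
whose decreasingly-ordered spectra are the `Λ_l`. -/
def KirwanMem {s r : ℕ} (Λ : Fin s → Fin r → ℝ) (t : ℝ) : Prop :=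
  (∀ l, Antitone (Λ l)) ∧
  ∃ (A : Fin s → Matrix (Fin r) (Fin r) ℂ) (hA : ∀ l, (A l).IsHermitian),
    (∑ l, A l) = (t : ℂ) • (1 : Matrix (Fin r) (Fin r) ℂ) ∧
    ∀ l, ∃ e : Equiv.Perm (Fin r), ∀ i, Λ l i = (hA l).eigenvalues (e i)

/-- The subspace of a flag with `k` elements (so `flagAt G 0 = ⊥`). -/
def flagAt {m : ℕ} (G : Flagg m) : ℕ → Submodule ℂ (Fin m → ℂ)
  | 0 => ⊥
  | (k + 1) => if h : k < m then G.F ⟨k, h⟩ else ⊤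

/-- The space `ℒ_I(F,G)` of linear maps `φ : ℂ^r → ℂ^q` with
`φ(F_l(j)) ⊆ G_l(I_l(j) - j)` for all `l, j`. -/
def LSpace {s r q : ℕ} (I : Fin s → Fin r → ℕ) (F : Fin s → Flagg r) (G : Fin s → Flagg q) :
    Submodule ℂ ((Fin r → ℂ) →ₗ[ℂ] (Fin q → ℂ)) where
  carrier := {φ | ∀ (l : Fin s) (j : Fin r), ∀ v ∈ (F l).F j,
    φ v ∈ flagAt (G l) (I l j - (j : ℕ))}
  add_mem' := by
    intro a b ha hb l j v hv
    simpa using add_mem (ha l j v hv) (hb l j v hv)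
  zero_mem' := by
    intro l j v hv
    simp
  smul_mem' := by
    intro c a ha l j v hv
    simpa using Submodule.smul_mem _ c (ha l j v hv)

/-- The true dimension `tdim I`, for a raw tuple `I ∈ Subsets(r, r + q, s)`
(here `q = n - r`). -/
def tdim {s : ℕ} (r q : ℕ) (I : Fin s → Fin r → ℕ) : ℕ :=
  sInf {m : ℕ | ∃ (F : Fin s → Flagg r) (G : Fin s → Flagg q), finrank ℂ (LSpace I F G) = m}

/-- The kernel dimension `kdim I`. -/
def kdim {s : ℕ} (r q : ℕ) (I : Fin s → Fin r → ℕ) : ℕ :=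
  sInf {m : ℕ | ∃ (F : Fin s → Flagg r) (G : Fin s → Flagg q)
      (φ : (Fin r → ℂ) →ₗ[ℂ] (Fin q → ℂ)), φ ∈ LSpace I F G ∧
      finrank ℂ (LSpace I F G) = tdim r q I ∧ finrank ℂ (LinearMap.ker φ) = m}

/-- The (`0`-based) Schubert position of a subspace `W` w.r.t. a flag:
`posN Fl W k` is the least `j` with `dim (Fl(j) ⊓ W) = k + 1`. -/
def posN {m : ℕ} (Fl : Flagg m) (W : Submodule ℂ (Fin m → ℂ)) (k : ℕ) : ℕ :=
  sInf {j : ℕ | ∃ h : j < m, finrank ℂ ↥(Fl.F ⟨j, h⟩ ⊓ W) = k + 1}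

/-- The (`0`-based, `ℕ`-valued) kernel position `kPos(I)_l(k)`. -/
def kPosFun {s : ℕ} (r q : ℕ) (I : Fin s → Fin r → ℕ) (l : Fin s) (k : ℕ) : ℕ :=
  sInf {p : ℕ | ∃ (F : Fin s → Flagg r) (G : Fin s → Flagg q)
      (φ : (Fin r → ℂ) →ₗ[ℂ] (Fin q → ℂ)), φ ∈ LSpace I F G ∧
      finrank ℂ (LSpace I F G) = tdim r q I ∧
      finrank ℂ (LinearMap.ker φ) = kdim r q I ∧ posN (F l) (LinearMap.ker φ) k = p}

/-- Apply an `r`-tuple of reals at a natural index (junk value `0` out of range). -/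
def applyI {r : ℕ} (f : Fin r → ℝ) (j : ℕ) : ℝ := if h : j < r then f ⟨j, h⟩ else 0

/-- Apply an `r`-tuple of naturals at a natural index (junk value `0` out of range). -/
def applyN {r : ℕ} (f : Fin r → ℕ) (j : ℕ) : ℕ := if h : j < r then f ⟨j, h⟩ else 0

/-- The slope `slope_θ(J) = (1/d) ∑_l ∑_{j ∈ J_l} θ_l(j)` of a tuple. -/
def slopeT {s d r : ℕ} (θ : Fin s → Fin r → ℝ) (J : Fin s → Fin d → Fin r) : ℝ :=
  ((d : ℝ))⁻¹ * ∑ l, ∑ k, θ l (J l k)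

/-- The slope `slope_θ(W, F) = slope_θ(Pos(W, F))` of a (nonzero) subspace. -/
def slopeW {s r : ℕ} (θ : Fin s → Fin r → ℝ) (F : Fin s → Flagg r)
    (W : Submodule ℂ (Fin r → ℂ)) : ℝ :=
  ((finrank ℂ W : ℝ))⁻¹ * ∑ l, ∑ k ∈ Finset.range (finrank ℂ W), applyI (θ l) (posN (F l) W k)

end

section AuxLemmas

open Module

lemma aux_exists_between {M : Type*} [AddCommGroup M] [Module ℂ M] [FiniteDimensional ℂ M]
    (A B : Submodule ℂ M) (hAB : A ≤ B) (h : finrank ℂ A < finrank ℂ B) :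
    ∃ C : Submodule ℂ M, A ≤ C ∧ C ≤ B ∧ finrank ℂ C = finrank ℂ A + 1 := by
  obtain ⟨v, hvB, hvA⟩ : ∃ v ∈ B, v ∉ A := by
    by_contra h'
    push_neg at h'
    exact absurd (Submodule.finrank_mono (show B ≤ A from h')) (by omega)
  have hv0 : v ≠ 0 := fun h0 => hvA (h0 ▸ A.zero_mem)
  refine ⟨A ⊔ Submodule.span ℂ {v}, le_sup_left,
    sup_le hAB ((Submodule.span_singleton_le_iff_mem v B).mpr hvB), ?_⟩
  have hinf : A ⊓ Submodule.span ℂ {v} = ⊥ := by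
    rw [eq_bot_iff]
    intro x hx
    rw [Submodule.mem_inf] at hx
    obtain ⟨hxA, hxs⟩ := hx
    obtain ⟨c, rfl⟩ := Submodule.mem_span_singleton.mp hxs
    rcases eq_or_ne c 0 with rfl | hc
    · simp
    · exact absurd (by simpa [smul_smul, inv_mul_cancel₀ hc] using A.smul_mem c⁻¹ hxA) hvA
  have hsum := Submodule.finrank_sup_add_finrank_inf_eq A (Submodule.span ℂ {v})
  rw [hinf] at hsum
  simp only [finrank_bot, add_zero, finrank_span_singleton hv0] at hsum
  omega

lemma aux_exists_flag {r : ℕ} (T : Fin r → Submodule ℂ (Fin r → ℂ)) (hT : Monotone T)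
    (hdim : ∀ j : Fin r, (j : ℕ) + 1 ≤ finrank ℂ (T j)) :
    ∃ G : Flagg r, ∀ j, G.F j ≤ T j := by
  classical
  set T' : ℕ → Submodule ℂ (Fin r → ℂ) := fun k => if h : k < r then T ⟨k, h⟩ else ⊤ with hT'
  have hT'mono : Monotone T' := by
    intro a b hab
    by_cases hb : b < r
    · have ha : a < r := lt_of_le_of_lt hab hb
      have e1 : T' a = T ⟨a, ha⟩ := by rw [hT']; exact dif_pos ha
      have e2 : T' b = T ⟨b, hb⟩ := by rw [hT']; exact dif_pos hb
      rw [e1, e2]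
      exact hT hab
    · have e2 : T' b = ⊤ := by rw [hT']; exact dif_neg hb
      rw [e2]
      exact le_top
  have hT'dim : ∀ k (h : k < r), k + 1 ≤ finrank ℂ (T' k) := by
    intro k h
    have h2 : T' k = T ⟨k, h⟩ := by rw [hT']; exact dif_pos h
    rw [h2]
    exact hdim ⟨k, h⟩
  set step : Submodule ℂ (Fin r → ℂ) → Submodule ℂ (Fin r → ℂ) → Submodule ℂ (Fin r → ℂ) :=
    fun A B => if h : A ≤ B ∧ finrank ℂ A < finrank ℂ B
      then (aux_exists_between A B h.1 h.2).choose else ⊤ with hstep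
  set g : ℕ → Submodule ℂ (Fin r → ℂ) :=
    fun k => Nat.rec (step ⊥ (T' 0)) (fun k ih => step ih (T' (k + 1))) k with hg
  have key : ∀ k, k < r → g k ≤ T' k ∧ finrank ℂ (g k) = k + 1 := by
    intro k
    induction k with
    | zero =>
      intro hk
      have h1 : (⊥ : Submodule ℂ (Fin r → ℂ)) ≤ T' 0 ∧
          finrank ℂ (⊥ : Submodule ℂ (Fin r → ℂ)) < finrank ℂ (T' 0) := by
        refine ⟨bot_le, ?_⟩
        have := hT'dim 0 hk
        rw [finrank_bot]
        omega
      have hspec := (aux_exists_between _ _ h1.1 h1.2).choose_spec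
      have hg0 : g 0 = (aux_exists_between _ _ h1.1 h1.2).choose := by
        have : g 0 = step ⊥ (T' 0) := rfl
        rw [this, hstep]
        exact dif_pos h1
      rw [hg0]
      refine ⟨hspec.2.1, ?_⟩
      rw [hspec.2.2, finrank_bot]
    | succ k ih =>
      intro hk
      have hk' : k < r := Nat.lt_of_succ_lt hk
      obtain ⟨h1, h2⟩ := ih hk'
      have hcond : g k ≤ T' (k + 1) ∧ finrank ℂ (g k) < finrank ℂ (T' (k + 1)) := by
        refine ⟨h1.trans (hT'mono (Nat.le_succ k)), ?_⟩
        have := hT'dim (k + 1) hk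
        omega
      have hspec := (aux_exists_between _ _ hcond.1 hcond.2).choose_spec
      have hgk : g (k + 1) = (aux_exists_between _ _ hcond.1 hcond.2).choose := by
        have : g (k + 1) = step (g k) (T' (k + 1)) := rfl
        rw [this, hstep]
        exact dif_pos hcond
      rw [hgk]
      refine ⟨hspec.2.1, ?_⟩
      rw [hspec.2.2, h2]
  have mono_succ : ∀ k, k + 1 < r → g k ≤ g (k + 1) := by
    intro k hk
    have hk' : k < r := Nat.lt_of_succ_lt hk
    obtain ⟨h1, h2⟩ := key k hk'
    have hcond : g k ≤ T' (k + 1) ∧ finrank ℂ (g k) < finrank ℂ (T' (k + 1)) := by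
      refine ⟨h1.trans (hT'mono (Nat.le_succ k)), ?_⟩
      have := hT'dim (k + 1) hk
      omega
    have hspec := (aux_exists_between _ _ hcond.1 hcond.2).choose_spec
    have hgk : g (k + 1) = (aux_exists_between _ _ hcond.1 hcond.2).choose := by
      have : g (k + 1) = step (g k) (T' (k + 1)) := rfl
      rw [this, hstep]
      exact dif_pos hcond
    rw [hgk]
    exact hspec.1
  have chain : ∀ b, b < r → ∀ a, a ≤ b → g a ≤ g b := by
    intro b
    induction b with
    | zero =>
      intro _ a ha
      rw [Nat.le_zero.mp ha]
    | succ b ih =>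
      intro hb a ha
      rcases Nat.eq_or_lt_of_le ha with rfl | ha'
      · exact le_rfl
      · exact (ih (Nat.lt_of_succ_lt hb) a (Nat.lt_succ_iff.mp ha')).trans (mono_succ b hb)
  refine ⟨⟨fun j => g j, ?_, ?_⟩, ?_⟩
  · intro j j' hjj
    exact chain j' j'.isLt j hjj
  · intro j
    exact (key j j.isLt).2
  · intro j
    have h2 : T' (j : ℕ) = T j := by rw [hT']; exact dif_pos j.isLt
    exact le_of_le_of_eq (key j j.isLt).1 h2

end AuxLemmas

/-- If `𝐈 ∈ Intersecting(r,n,s)^σ` and `𝐉 ∈ Intersecting(d,r,s)^σ` then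
`𝐈𝐉 ∈ Intersecting(d,n,s)^σ`. -/
theorem intersecting_comp_sym (s d r n : ℕ) (hs : 2 ≤ s) (hd : 1 ≤ d)
    (hdr : d ≤ r) (hrn : r ≤ n) (σ : Equiv.Perm (Fin s))
    (I : Fin s → Fin r → Fin n) (hI : ∀ l, StrictMono (I l))
    (hIσ : (fun l => I (σ⁻¹ l)) = I) (hIint : Intersecting I)
    (J : Fin s → Fin d → Fin r) (hJ : ∀ l, StrictMono (J l))
    (hJσ : (fun l => J (σ⁻¹ l)) = J) (hJint : Intersecting J) :
    (∀ l, StrictMono (fun k => I l (J l k))) ∧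
      Intersecting (fun l k => I l (J l k)) ∧
      (fun l (k : Fin d) => I (σ⁻¹ l) (J (σ⁻¹ l) k)) = (fun l k => I l (J l k)) := by
  refine ⟨fun l => (hI l).comp (hJ l), ?_, ?_⟩
  · intro F
    obtain ⟨V, hVrank, hV⟩ := hIint F
    have hVr : finrank ℂ V = finrank ℂ (Fin r → ℂ) := by
      rw [hVrank, Module.finrank_fin_fun]
    let e : V ≃ₗ[ℂ] (Fin r → ℂ) := LinearEquiv.ofFinrankEq _ _ hVr
    let T : Fin s → Fin r → Submodule ℂ (Fin r → ℂ) :=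
      fun l j => Submodule.map e.toLinearMap
        (Submodule.comap V.subtype ((F l).F (I l j)))
    have hTrank : ∀ l j, finrank ℂ (T l j) = finrank ℂ ↥(V ⊓ (F l).F (I l j)) := by
      intro l j
      show finrank ℂ (Submodule.map _ _) = _
      rw [LinearEquiv.finrank_map_eq, ← Submodule.finrank_map_subtype_eq V,
        Submodule.map_comap_subtype]
    have hTmono : ∀ l, Monotone (T l) := by
      intro l a b hab
      exact Submodule.map_mono (Submodule.comap_mono ((F l).mono ((hI l).monotone hab)))
    have hTdim : ∀ l (j : Fin r), (j : ℕ) + 1 ≤ finrank ℂ (T l j) := by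
      intro l j
      rw [hTrank]
      exact hV l j
    choose G hG using fun l => aux_exists_flag (T l) (hTmono l) (hTdim l)
    obtain ⟨W, hWrank, hW⟩ := hJint G
    refine ⟨Submodule.map V.subtype (Submodule.map e.symm.toLinearMap W), ?_, ?_⟩
    · rw [Submodule.finrank_map_subtype_eq, LinearEquiv.finrank_map_eq, hWrank]
    · intro l k
      have hsymm : Submodule.map e.symm.toLinearMap (T l (J l k))
          = Submodule.comap V.subtype ((F l).F (I l (J l k))) := by
        show Submodule.map _ (Submodule.map _ _) = _
        ext x
        simp [Submodule.mem_map_equiv]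
      have hle : Submodule.map V.subtype (Submodule.map e.symm.toLinearMap (W ⊓ (G l).F (J l k)))
          ≤ (Submodule.map V.subtype (Submodule.map e.symm.toLinearMap W)) ⊓
            (F l).F (I l (J l k)) := by
        refine le_inf (Submodule.map_mono (Submodule.map_mono inf_le_left)) ?_
        have h1 : W ⊓ (G l).F (J l k) ≤ T l (J l k) := inf_le_right.trans (hG l (J l k))
        calc Submodule.map V.subtype (Submodule.map e.symm.toLinearMap (W ⊓ (G l).F (J l k)))
            ≤ Submodule.map V.subtype (Submodule.map e.symm.toLinearMap (T l (J l k))) :=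
              Submodule.map_mono (Submodule.map_mono h1)
          _ = Submodule.map V.subtype
              (Submodule.comap V.subtype ((F l).F (I l (J l k)))) := by rw [hsymm]
          _ ≤ (F l).F (I l (J l k)) := by
              rw [Submodule.map_comap_subtype]
              exact inf_le_right
      have heq : finrank ℂ
            ↥(Submodule.map V.subtype (Submodule.map e.symm.toLinearMap (W ⊓ (G l).F (J l k))))
          = finrank ℂ ↥(W ⊓ (G l).F (J l k)) := by
        rw [Submodule.finrank_map_subtype_eq, LinearEquiv.finrank_map_eq]
      calc (k : ℕ) + 1 ≤ finrank ℂ ↥(W ⊓ (G l).F (J l k)) := hW l k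
        _ = _ := heq.symm
        _ ≤ _ := Submodule.finrank_mono hle
  · funext l k
    rw [congrFun hJσ l, congrFun hIσ l]
end

section
/- Let 1 ≤ d ≤ r ≤ n. If 𝐈 ∈ Intersecting(r,n,s) and 𝐉 ∈ Intersecting(d,r,s), then the composition 𝐈𝐉 belongs to Intersecting(d,n,s). -/
open Module

/-! Pick `V ∈ ⋂ₗ Ω_{𝐈_l}(𝐄_l)` of dimension `r` and identify it with `ℂ^r` by an injective map `ι`.
The pulled-back traces `ι⁻¹(𝐄_l(𝐈_l(j)))` form chains whose `j`-th member has dimension at least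
`j`, so each refines to a complete flag `G_l` of `ℂ^r`. Since `𝐉` is intersecting there is
`U ∈ ⋂ₗ Ω_{𝐉_l}(G_l)`, and `ι(U)` lies in `Ω_{𝐈_l 𝐉_l}(𝐄_l)` because
`ι(U ∩ G_l(𝐉_l(k))) ⊆ ι(U) ∩ 𝐄_l(𝐈_l(𝐉_l(k)))`. -/

open Submodule

section Chains

variable {K V : Type*} [DivisionRing K] [AddCommGroup V] [Module K V] [FiniteDimensional K V]

theorem Submodule.exists_le_le_finrank_eq_succ {P Q : Submodule K V} (hPQ : P ≤ Q)
    (hlt : finrank K P < finrank K Q) :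
    ∃ T : Submodule K V, P ≤ T ∧ T ≤ Q ∧ finrank K T = finrank K P + 1 := by
  obtain ⟨v, hvQ, hvP⟩ := SetLike.exists_of_lt (lt_of_le_of_finrank_lt_finrank hPQ hlt)
  exact ⟨P ⊔ span K {v}, le_sup_left, sup_le hPQ ((span_singleton_le_iff_mem v Q).mpr hvQ),
    finrank_sup_span_singleton hvP⟩

theorem Submodule.exists_monotone_le_finrank_eq {D : ℕ → Submodule K V} (hD : Monotone D)
    (m : ℕ) (hdim : ∀ j ≤ m, j ≤ finrank K (D j)) :
    ∃ H : ℕ → Submodule K V, Monotone H ∧ ∀ j ≤ m, H j ≤ D j ∧ finrank K (H j) = j := by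
  induction m with
  | zero => exact ⟨fun _ => ⊥, monotone_const, fun j hj => by simp [Nat.le_zero.mp hj]⟩
  | succ m ih =>
    obtain ⟨H, hH, hHD⟩ := ih fun j hj => hdim j (Nat.le_succ_of_le hj)
    obtain ⟨hHm, hHm_rank⟩ := hHD m le_rfl
    obtain ⟨T, hHT, hTD, hT⟩ := exists_le_le_finrank_eq_succ (hHm.trans (hD m.le_succ))
      (by rw [hHm_rank]; exact hdim (m + 1) le_rfl)
    rw [hHm_rank] at hT
    refine ⟨fun j => if j ≤ m then H j else T, fun a b hab => ?_, fun j hj => ?_⟩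
    · dsimp only
      split_ifs with ha hb hb
      exacts [hH hab, (hH ha).trans hHT, absurd (hab.trans hb) ha, le_rfl]
    · by_cases hjm : j ≤ m
      · beta_reduce; rw [if_pos hjm]; exact hHD j hjm
      · obtain rfl : j = m + 1 := by omega
        beta_reduce; rw [if_neg hjm]; exact ⟨hTD, hT⟩

end Chains

section Pullback

variable {K V W : Type*} [DivisionRing K] [AddCommGroup V] [Module K V] [AddCommGroup W]
  [Module K W] {f : V →ₗ[K] W}

theorem Submodule.finrank_map_of_injective (hf : Function.Injective f) (p : Submodule K V) :
    finrank K (p.map f) = finrank K p :=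
  (equivMapOfInjective f hf p).finrank_eq.symm

theorem Submodule.finrank_comap_of_injective (hf : Function.Injective f) (p : Submodule K W) :
    finrank K (p.comap f) = finrank K ↥(LinearMap.range f ⊓ p) := by
  rw [← map_comap_eq, finrank_map_of_injective hf]

theorem Submodule.exists_injective_range_eq (p : Submodule K W) {r : ℕ} [FiniteDimensional K p]
    (hp : finrank K p = r) :
    ∃ f : (Fin r → K) →ₗ[K] W, Function.Injective f ∧ LinearMap.range f = p := by
  let e := (finBasisOfFinrankEq K p hp).equivFun.symm
  refine ⟨p.subtype ∘ₗ e.toLinearMap, p.injective_subtype.comp e.injective, ?_⟩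
  rw [LinearMap.range_comp, LinearEquiv.range, map_top, range_subtype]

end Pullback

theorem Flagg.exists_le {m : ℕ} (D : Fin m → Submodule ℂ (Fin m → ℂ)) (hD : Monotone D)
    (hdim : ∀ j : Fin m, (j : ℕ) + 1 ≤ finrank ℂ (D j)) : ∃ G : Flagg m, ∀ j, G.F j ≤ D j := by
  set D' : ℕ → Submodule ℂ (Fin m → ℂ) := fun j => ⨆ (i : Fin m) (_ : (i : ℕ) < j), D i
  have hD' : Monotone D' := fun a b hab =>
    iSup_mono fun i => iSup_mono' fun hi => ⟨hi.trans_le hab, le_rfl⟩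
  have hD'_succ (j : ℕ) (hj : j < m) : D' (j + 1) = D ⟨j, hj⟩ :=
    le_antisymm (iSup₂_le fun i hi => hD (Nat.lt_succ_iff.mp hi))
      (le_iSup₂_of_le ⟨j, hj⟩ (Nat.lt_succ_self j) le_rfl)
  obtain ⟨H, hH, hHD'⟩ := exists_monotone_le_finrank_eq hD' m fun j hj => by
    rcases j with _ | j
    · exact Nat.zero_le _
    · exact hD'_succ j hj ▸ hdim ⟨j, hj⟩
  refine ⟨⟨fun j => H (j + 1), fun a b hab => hH (Nat.succ_le_succ hab),
    fun j => (hHD' (j + 1) j.isLt).2⟩, fun j => ?_⟩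
  exact hD'_succ j j.isLt ▸ (hHD' (j + 1) j.isLt).1

theorem Flagg.exists_le_comap {r n : ℕ} (F : Flagg n) {I : Fin r → Fin n} (hI : Monotone I)
    {ι : (Fin r → ℂ) →ₗ[ℂ] (Fin n → ℂ)} (hι : Function.Injective ι)
    (hdim : ∀ j : Fin r, (j : ℕ) + 1 ≤ finrank ℂ ↥(LinearMap.range ι ⊓ F.F (I j))) :
    ∃ G : Flagg r, ∀ j, G.F j ≤ (F.F (I j)).comap ι :=
  Flagg.exists_le _ (fun _ _ hab => comap_mono (F.mono (hI hab)))
    fun j => (finrank_comap_of_injective hι _).symm ▸ hdim j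

theorem intersecting_comp_general (s d r n : ℕ)
    (I : Fin s → Fin r → Fin n) (hI : ∀ l, StrictMono (I l)) (hIint : Intersecting I)
    (J : Fin s → Fin d → Fin r) (hJint : Intersecting J) :
    Intersecting (fun l k => I l (J l k)) := by
  intro F
  obtain ⟨V, hV, hVF⟩ := hIint F
  obtain ⟨ι, hι, rfl⟩ := V.exists_injective_range_eq hV
  choose G hG using fun l => (F l).exists_le_comap (hI l).monotone hι (hVF l)
  obtain ⟨U, hU, hUG⟩ := hJint G
  refine ⟨U.map ι, by rw [finrank_map_of_injective hι, hU], fun l k => ?_⟩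
  calc (k : ℕ) + 1 ≤ finrank ℂ ↥(U ⊓ (G l).F (J l k)) := hUG l k
    _ = finrank ℂ ↥((U ⊓ (G l).F (J l k)).map ι) := (finrank_map_of_injective hι _).symm
    _ ≤ _ := finrank_mono <| le_inf (map_mono inf_le_left) <|
      (map_mono (inf_le_right.trans (hG l _))).trans (map_comap_le _ _)

/-- If `𝐈 ∈ Intersecting(r,n,s)` and `𝐉 ∈ Intersecting(d,r,s)` then
`𝐈𝐉 ∈ Intersecting(d,n,s)`. -/
theorem intersecting_comp (s d r n : ℕ) (hs : 2 ≤ s) (hd : 1 ≤ d)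
    (hdr : d ≤ r) (hrn : r ≤ n)
    (I : Fin s → Fin r → Fin n) (hI : ∀ l, StrictMono (I l)) (hIint : Intersecting I)
    (J : Fin s → Fin d → Fin r) (hJ : ∀ l, StrictMono (J l)) (hJint : Intersecting J) :
    Intersecting (fun l k => I l (J l k)) :=
  intersecting_comp_general s d r n I hI hIint J hJint
end

section
/- (Harder–Narasimhan lemma.) Let V be an r-dimensional complex vector space, 𝐅 ∈ Flag(V)^s an s-tuple of complete flags on V, and θ = (θ_l)_{l∈[s]} ∈ (ℝ^r)^s such that each θ_l is weakly increasing. Let m_* := min{ slope_θ(W,𝐅) : W a nonzero linear subspace of V } and d_* := max{ dim W : W a nonzero linear subspace of V with slope_θ(W,𝐅) = m_* }. Then there exists a unique linear subspace W_* of V with slope_θ(W_*,𝐅) = m_* and dim W_* = d_*. -/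
open Module

/-!
Write `weight W = dim W · slope_θ(W, 𝐅)`. Summation by parts turns the sum over Schubert
positions into `∑_l (dim W · θ_l(r) - ∑_j (θ_l(j+1) - θ_l(j)) · dim (F_l(j+1) ∩ W))`. As each
`θ_l` is increasing and `W ↦ dim (F_l(j) ∩ W)` is supermodular, `weight` is submodular, while
`dim` is modular. So `weight - m_* · dim` is a nonnegative submodular function vanishing on the
subspaces of slope `m_*`, which are therefore closed under `⊔`; two of them of the maximal
dimension `d_*` both equal their sum.
-/

open Finset

section Flags

variable {r : ℕ}

lemma flagAt_succ (G : Flagg r) {j : ℕ} (h : j < r) : flagAt G (j + 1) = G.F ⟨j, h⟩ := dif_pos h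

lemma flagAt_mono (G : Flagg r) : Monotone (flagAt G) := by
  refine monotone_nat_of_le_succ fun j => ?_
  rcases j with _ | j
  · exact bot_le
  · by_cases h : j + 1 < r
    · rw [flagAt_succ G h, flagAt_succ G (by omega)]
      exact G.mono (Fin.mk_le_mk.2 j.le_succ)
    · rw [show flagAt G (j + 1 + 1) = ⊤ from dif_neg h]
      exact le_top

lemma finrank_flagAt (G : Flagg r) {j : ℕ} (hj : j ≤ r) : finrank ℂ (flagAt G j) = j := by
  rcases j with _ | j
  · exact finrank_bot ℂ _
  · rw [flagAt_succ G hj, G.rank_eq]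

lemma flagAt_self (G : Flagg r) : flagAt G r = ⊤ :=
  Submodule.eq_top_of_finrank_eq <| by rw [finrank_flagAt G le_rfl, Module.finrank_fin_fun]

/-- `dim (F(j) ∩ W)`, where `flagAt G j` is the `j`-dimensional step; the Schubert positions of `W`
are the `j` at which it jumps. -/
noncomputable def Flagg.dimInter (G : Flagg r) (W : Submodule ℂ (Fin r → ℂ)) (j : ℕ) : ℕ :=
  finrank ℂ ↥(flagAt G j ⊓ W)

namespace Flagg

variable (G : Flagg r) (W : Submodule ℂ (Fin r → ℂ))

lemma dimInter_zero : G.dimInter W 0 = 0 := by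
  rw [dimInter, flagAt, bot_inf_eq, finrank_bot]

lemma dimInter_mono : Monotone (G.dimInter W) := fun _ _ h =>
  Submodule.finrank_mono (inf_le_inf_right W (flagAt_mono G h))

lemma dimInter_le_finrank (j : ℕ) : G.dimInter W j ≤ finrank ℂ W :=
  Submodule.finrank_mono inf_le_right

lemma dimInter_self : G.dimInter W r = finrank ℂ W := by
  rw [dimInter, flagAt_self, top_inf_eq]

lemma dimInter_succ_le {j : ℕ} (hj : j < r) : G.dimInter W (j + 1) ≤ G.dimInter W j + 1 := by
  have hsup : finrank ℂ ↥(flagAt G j ⊔ (flagAt G (j + 1) ⊓ W)) ≤ j + 1 := by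
    refine (Submodule.finrank_mono ?_).trans (finrank_flagAt G (j := j + 1) hj).le
    exact sup_le (flagAt_mono G j.le_succ) inf_le_left
  have hinf : flagAt G j ⊓ (flagAt G (j + 1) ⊓ W) = flagAt G j ⊓ W := by
    rw [← inf_assoc, inf_of_le_left (flagAt_mono G j.le_succ)]
  have := Submodule.finrank_sup_add_finrank_inf_eq (flagAt G j) (flagAt G (j + 1) ⊓ W)
  rw [hinf, finrank_flagAt G hj.le] at this
  unfold dimInter
  omega

lemma dimInter_add_dimInter_le (W₁ W₂ : Submodule ℂ (Fin r → ℂ)) (j : ℕ) :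
    G.dimInter W₁ j + G.dimInter W₂ j ≤ G.dimInter (W₁ ⊔ W₂) j + G.dimInter (W₁ ⊓ W₂) j := by
  unfold dimInter
  set U := flagAt G j
  have hsup : U ⊓ W₁ ⊔ U ⊓ W₂ ≤ U ⊓ (W₁ ⊔ W₂) :=
    sup_le (inf_le_inf_left U le_sup_left) (inf_le_inf_left U le_sup_right)
  have := Submodule.finrank_sup_add_finrank_inf_eq (U ⊓ W₁) (U ⊓ W₂)
  rw [← inf_inf_distrib_left] at this
  have := Submodule.finrank_mono hsup
  omega

end Flagg

end Flags

lemma Nat.exists_lt_apply_succ_eq_of_lt {M : ℕ → ℕ} {n k : ℕ} (h0 : M 0 = 0)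
    (hstep : ∀ j < n, M (j + 1) ≤ M j + 1) (hk : k < M n) : ∃ j < n, M (j + 1) = k + 1 := by
  induction n with
  | zero => omega
  | succ n ih =>
    by_cases hn : k < M n
    · obtain ⟨j, hj, hjk⟩ := ih (fun j hj => hstep j (by omega)) hn
      exact ⟨j, by omega, hjk⟩
    · exact ⟨n, by omega, by have := hstep n (by omega); omega⟩

section Positions

variable {r : ℕ} (G : Flagg r) (W : Submodule ℂ (Fin r → ℂ))

lemma posN_eq_sInf_dimInter (k : ℕ) :
    posN G W k = sInf {j : ℕ | j < r ∧ G.dimInter W (j + 1) = k + 1} := by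
  unfold posN
  congr 1
  ext j
  exact ⟨fun ⟨h, hj⟩ => ⟨h, by rwa [Flagg.dimInter, flagAt_succ G h]⟩,
    fun ⟨h, hj⟩ => ⟨h, by rwa [Flagg.dimInter, flagAt_succ G h] at hj⟩⟩

lemma posN_le (k : ℕ) : posN G W k ≤ r := by
  rw [posN_eq_sInf_dimInter]
  rcases Set.eq_empty_or_nonempty {j : ℕ | j < r ∧ G.dimInter W (j + 1) = k + 1} with h | h
  · rw [h, Nat.sInf_empty]
    exact r.zero_le
  · exact (Nat.sInf_mem h).1.le

variable {W}

lemma posN_lt_and_dimInter_eq {k : ℕ} (hk : k < finrank ℂ W) :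
    posN G W k < r ∧ G.dimInter W (posN G W k + 1) = k + 1 := by
  rw [← G.dimInter_self W] at hk
  have hne : {j : ℕ | j < r ∧ G.dimInter W (j + 1) = k + 1}.Nonempty :=
    Nat.exists_lt_apply_succ_eq_of_lt (G.dimInter_zero W) (fun j hj => G.dimInter_succ_le W hj) hk
  rw [posN_eq_sInf_dimInter]
  exact Nat.sInf_mem hne

lemma posN_le_iff {k j : ℕ} (hk : k < finrank ℂ W) (hj : j < r) :
    posN G W k ≤ j ↔ k < G.dimInter W (j + 1) := by
  obtain ⟨-, hpos⟩ := posN_lt_and_dimInter_eq G hk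
  refine ⟨fun h => ?_, fun h => ?_⟩
  · have := G.dimInter_mono W (Nat.add_le_add_right h 1)
    omega
  · obtain ⟨i, hi, hik⟩ := Nat.exists_lt_apply_succ_eq_of_lt (G.dimInter_zero W)
      (fun i hi => G.dimInter_succ_le W (by omega)) h
    rw [posN_eq_sInf_dimInter]
    have hi' : i ∈ {j : ℕ | j < r ∧ G.dimInter W (j + 1) = k + 1} := ⟨by omega, hik⟩
    exact (Nat.sInf_le hi').trans (by omega)

lemma filter_posN_le_eq_range {j : ℕ} (hj : j < r) :
    (range (finrank ℂ W)).filter (fun k => posN G W k ≤ j) = range (G.dimInter W (j + 1)) := by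
  ext k
  simp only [mem_filter, mem_range]
  have := G.dimInter_le_finrank W (j + 1)
  exact ⟨fun ⟨hk, h⟩ => (posN_le_iff G hk hj).1 h,
    fun h => ⟨by omega, (posN_le_iff G (by omega) hj).2 h⟩⟩

variable (W)

/-- Summation by parts: the jumps of `j ↦ dim (F(j) ∩ W)` sit at the Schubert positions of `W`. -/
lemma sum_range_finrank_apply_posN (g : ℕ → ℝ) :
    ∑ k ∈ range (finrank ℂ W), g (posN G W k) =
      finrank ℂ W * g (r - 1) -
        ∑ j ∈ range (r - 1), (g (j + 1) - g j) * G.dimInter W (j + 1) := by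
  have htel : ∀ k ∈ range (finrank ℂ W), g (posN G W k) =
      g (r - 1) - ∑ j ∈ range (r - 1), if posN G W k ≤ j then g (j + 1) - g j else 0 := by
    intro k hk
    have hp := (posN_lt_and_dimInter_eq G (mem_range.1 hk)).1
    rw [← sum_filter, show (range (r - 1)).filter (posN G W k ≤ ·) = Ico (posN G W k) (r - 1) by
      ext; simp only [mem_filter, mem_range, mem_Ico]; omega, sum_Ico_sub g (by omega)]
    ring
  rw [sum_congr rfl htel, sum_sub_distrib, sum_const, card_range, nsmul_eq_mul, sum_comm]
  congr 1
  refine sum_congr rfl fun j hj => ?_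
  rw [sum_ite, sum_const_zero, add_zero, sum_const, nsmul_eq_mul,
    filter_posN_le_eq_range G (by simp at hj; omega), card_range, mul_comm]

end Positions

lemma applyI_le_applyI_succ {r : ℕ} {f : Fin r → ℝ} (hf : Monotone f) {j : ℕ} (hj : j + 1 < r) :
    applyI f j ≤ applyI f (j + 1) := by
  rw [applyI, applyI, dif_pos (by omega), dif_pos hj]
  exact hf (Fin.mk_le_mk.2 j.le_succ)

lemma finrank_submodule_le {r : ℕ} (W : Submodule ℂ (Fin r → ℂ)) : finrank ℂ W ≤ r :=
  (Submodule.finrank_le W).trans_eq (Module.finrank_fin_fun ℂ)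

section Slopes

variable {s r : ℕ} (θ : Fin s → Fin r → ℝ) (F : Fin s → Flagg r)

/-- `dim W · slope_θ(W, 𝐅)`, so that `slopeW θ F W = (dim W)⁻¹ * weight θ F W` by definition. -/
noncomputable def weight (W : Submodule ℂ (Fin r → ℂ)) : ℝ :=
  ∑ l, ∑ k ∈ range (finrank ℂ W), applyI (θ l) (posN (F l) W k)

lemma weight_bot : weight θ F ⊥ = 0 := by
  simp [weight]

variable {θ}

lemma weight_sup_add_weight_inf_le (hθ : ∀ l, Monotone (θ l))
    (W₁ W₂ : Submodule ℂ (Fin r → ℂ)) :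
    weight θ F (W₁ ⊔ W₂) + weight θ F (W₁ ⊓ W₂) ≤ weight θ F W₁ + weight θ F W₂ := by
  have hdim : (finrank ℂ ↥(W₁ ⊔ W₂) : ℝ) + finrank ℂ ↥(W₁ ⊓ W₂) = finrank ℂ W₁ + finrank ℂ W₂ := by
    exact_mod_cast Submodule.finrank_sup_add_finrank_inf_eq W₁ W₂
  simp only [weight, sum_range_finrank_apply_posN, ← sum_add_distrib]
  refine sum_le_sum fun l _ => ?_
  set g := applyI (θ l)
  set D := (F l).dimInter
  have hsuper : ∑ j ∈ range (r - 1), (g (j + 1) - g j) * ((D W₁ (j + 1) : ℝ) + D W₂ (j + 1)) ≤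
      ∑ j ∈ range (r - 1), (g (j + 1) - g j) * ((D (W₁ ⊔ W₂) (j + 1) : ℝ) + D (W₁ ⊓ W₂) (j + 1)) :=
    sum_le_sum fun j hj => mul_le_mul_of_nonneg_left
      (by exact_mod_cast (F l).dimInter_add_dimInter_le W₁ W₂ (j + 1))
      (sub_nonneg.2 (applyI_le_applyI_succ (hθ l) (by simp at hj; omega)))
  simp only [mul_add, sum_add_distrib] at hsuper
  have := congrArg (· * g (r - 1)) hdim
  simp only [add_mul] at this
  linarith

variable {F}

lemma finrank_pos_of_ne_bot {W : Submodule ℂ (Fin r → ℂ)} (hW : W ≠ ⊥) : (0 : ℝ) < finrank ℂ W :=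
  Nat.cast_pos.2 (Nat.pos_of_ne_zero (mt Submodule.finrank_eq_zero.1 hW))

lemma le_slopeW_iff {W : Submodule ℂ (Fin r → ℂ)} (hW : W ≠ ⊥) {m : ℝ} :
    m ≤ slopeW θ F W ↔ m * finrank ℂ W ≤ weight θ F W := by
  rw [mul_comm]
  exact le_inv_mul_iff₀ (finrank_pos_of_ne_bot hW)

lemma slopeW_eq_iff {W : Submodule ℂ (Fin r → ℂ)} (hW : W ≠ ⊥) {m : ℝ} :
    slopeW θ F W = m ↔ weight θ F W = m * finrank ℂ W := by
  rw [mul_comm]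
  exact inv_mul_eq_iff_eq_mul₀ (finrank_pos_of_ne_bot hW).ne'

lemma mul_finrank_le_weight {m : ℝ} (hmin : ∀ W ≠ ⊥, m ≤ slopeW θ F W)
    (W : Submodule ℂ (Fin r → ℂ)) : m * finrank ℂ W ≤ weight θ F W := by
  rcases eq_or_ne W ⊥ with rfl | hW
  · simp [weight_bot]
  · exact (le_slopeW_iff hW).1 (hmin W hW)

/-- Submodularity of `weight` forces the nonnegative function `weight - m · dim` to vanish on
`W₁ ⊔ W₂`. -/
lemma slopeW_sup_eq (hθ : ∀ l, Monotone (θ l)) {m : ℝ} (hmin : ∀ W ≠ ⊥, m ≤ slopeW θ F W)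
    {W₁ W₂ : Submodule ℂ (Fin r → ℂ)} (h₁ : W₁ ≠ ⊥) (h₂ : W₂ ≠ ⊥)
    (hm₁ : slopeW θ F W₁ = m) (hm₂ : slopeW θ F W₂ = m) : slopeW θ F (W₁ ⊔ W₂) = m := by
  have hsup : W₁ ⊔ W₂ ≠ ⊥ := fun h => h₁ (sup_eq_bot_iff.1 h).1
  rw [slopeW_eq_iff h₁] at hm₁
  rw [slopeW_eq_iff h₂] at hm₂
  have hdim : (finrank ℂ ↥(W₁ ⊔ W₂) : ℝ) + finrank ℂ ↥(W₁ ⊓ W₂) = finrank ℂ W₁ + finrank ℂ W₂ := by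
    exact_mod_cast Submodule.finrank_sup_add_finrank_inf_eq W₁ W₂
  have := weight_sup_add_weight_inf_le F hθ W₁ W₂
  have := mul_finrank_le_weight hmin (W₁ ⊔ W₂)
  have := mul_finrank_le_weight hmin (W₁ ⊓ W₂)
  have := congrArg (m * ·) hdim
  simp only [mul_add] at this
  exact (slopeW_eq_iff hsup).2 (by linarith)

variable (θ F)

lemma finite_range_slopeW : (Set.range (slopeW θ F)).Finite := by
  let slopeOf : Fin (r + 1) × (Fin s → Fin r → Fin (r + 1)) → ℝ := fun p =>
    ((p.1 : ℕ) : ℝ)⁻¹ * ∑ l, ∑ k ∈ range p.1, applyI (θ l) (applyN (fun i => (p.2 l i : ℕ)) k)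
  refine (Set.finite_range slopeOf).subset ?_
  rintro _ ⟨W, rfl⟩
  refine ⟨(⟨finrank ℂ W, Nat.lt_succ_of_le (finrank_submodule_le W)⟩,
    fun l i => ⟨posN (F l) W i, Nat.lt_succ_of_le (posN_le (F l) W i)⟩), ?_⟩
  refine congrArg _ (sum_congr rfl fun l _ => sum_congr rfl fun k hk => ?_)
  have := finrank_submodule_le W
  rw [applyN, dif_pos (by simp at hk; omega)]

end Slopes

theorem harder_narasimhan_general (s r : ℕ) (hr : 1 ≤ r)
    (θ : Fin s → Fin r → ℝ) (hθ : ∀ l, Monotone (θ l))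
    (F : Fin s → Flagg r) :
    ∃! W : Submodule ℂ (Fin r → ℂ),
      W ≠ ⊥ ∧
      slopeW θ F W =
        sInf {x : ℝ | ∃ W' : Submodule ℂ (Fin r → ℂ), W' ≠ ⊥ ∧ slopeW θ F W' = x} ∧
      finrank ℂ W =
        sSup {m : ℕ | ∃ W' : Submodule ℂ (Fin r → ℂ), W' ≠ ⊥ ∧
          slopeW θ F W' =
            sInf {x : ℝ | ∃ W'' : Submodule ℂ (Fin r → ℂ), W'' ≠ ⊥ ∧ slopeW θ F W'' = x} ∧
          finrank ℂ W' = m} := by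
  set S := {x : ℝ | ∃ W' : Submodule ℂ (Fin r → ℂ), W' ≠ ⊥ ∧ slopeW θ F W' = x}
  have hS : S.Finite := (finite_range_slopeW θ F).subset fun _ ⟨W, _, hW⟩ => ⟨W, hW⟩
  have : NeZero r := ⟨by omega⟩
  obtain ⟨W₀, hW₀, hW₀m⟩ := Set.Nonempty.csInf_mem (s := S) ⟨_, ⊤, top_ne_bot, rfl⟩ hS
  have hmin : ∀ W ≠ ⊥, sInf S ≤ slopeW θ F W := fun W hW => csInf_le hS.bddBelow ⟨W, hW, rfl⟩
  set D := {d : ℕ | ∃ W', W' ≠ ⊥ ∧ slopeW θ F W' = sInf S ∧ finrank ℂ W' = d}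
  have hD : BddAbove D := ⟨r, fun _ ⟨W, _, _, hW⟩ => hW ▸ finrank_submodule_le W⟩
  obtain ⟨W, hW, hWm, hWd⟩ := Nat.sSup_mem (s := D) ⟨_, W₀, hW₀, hW₀m, rfl⟩ hD
  refine ⟨W, ⟨hW, hWm, hWd⟩, fun Y ⟨hY, hYm, hYd⟩ => ?_⟩
  have hYW : finrank ℂ ↥(Y ⊔ W) ≤ finrank ℂ Y :=
    hYd ▸ le_csSup hD ⟨Y ⊔ W, fun h => hY (sup_eq_bot_iff.1 h).1,
      slopeW_sup_eq hθ hmin hY hW hYm hWm, rfl⟩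
  have hWY : W ≤ Y := (Submodule.eq_of_le_of_finrank_le le_sup_left hYW).symm ▸ le_sup_right
  exact (Submodule.eq_of_le_of_finrank_eq hWY (hWd.trans hYd.symm)).symm

/-- **Harder–Narasimhan lemma.** Let `θ_l` be weakly increasing real `r`-tuples
and `𝐅` an `s`-tuple of complete flags on an `r`-dimensional space. Let `m_*` be
the minimal slope of a nonzero subspace and `d_*` the maximal dimension of a
nonzero subspace of slope `m_*`. Then there is a unique subspace `W_*` with
slope `m_*` and dimension `d_*`. -/
theorem harder_narasimhan (s r : ℕ) (hs : 2 ≤ s) (hr : 1 ≤ r)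
    (θ : Fin s → Fin r → ℝ) (hθ : ∀ l, Monotone (θ l))
    (F : Fin s → Flagg r) :
    ∃! W : Submodule ℂ (Fin r → ℂ),
      W ≠ ⊥ ∧
      slopeW θ F W =
        sInf {x : ℝ | ∃ W' : Submodule ℂ (Fin r → ℂ), W' ≠ ⊥ ∧ slopeW θ F W' = x} ∧
      finrank ℂ W =
        sSup {m : ℕ | ∃ W' : Submodule ℂ (Fin r → ℂ), W' ≠ ⊥ ∧
          slopeW θ F W' =
            sInf {x : ℝ | ∃ W'' : Submodule ℂ (Fin r → ℂ), W'' ≠ ⊥ ∧ slopeW θ F W'' = x} ∧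
          finrank ℂ W' = m} :=
  harder_narasimhan_general s r hr θ hθ F
end

section
/- Let 1 ≤ d ≤ r ≤ n, 𝐈 ∈ Subsets(r,n,s) and 𝐉 ∈ Subsets(d,r,s). Then edim(𝐈𝐉) − edim 𝐉 = d·slope_{−Γ(𝐈)}(𝐉) + d(n−r). -/
open Module

/-- `edim(𝐈𝐉) - edim 𝐉 = d · slope_{-Γ(𝐈)}(𝐉) + d (n - r)`. -/
theorem edim_slope_relation (s d r n : ℕ) (hs : 2 ≤ s) (hd : 1 ≤ d)
    (hdr : d ≤ r) (hrn : r ≤ n)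
    (I : Fin s → Fin r → Fin n) (hI : ∀ l, StrictMono (I l))
    (J : Fin s → Fin d → Fin r) (hJ : ∀ l, StrictMono (J l)) :
    ((edim (fun l k => I l (J l k)) : ℝ)) - ((edim J : ℝ)) =
      (d : ℝ) * slopeT (fun l j => -(GammaT I l j)) J + (d : ℝ) * ((n : ℝ) - (r : ℝ)) := by
  have hd' : (d : ℝ) ≠ 0 := by positivity
  simp only [edim, dimI, slopeT, GammaT]
  rw [mul_inv_cancel_left₀ hd']
  push_cast
  simp only [Finset.sum_sub_distrib, Finset.sum_const, Finset.card_univ, Fintype.card_fin,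
    nsmul_eq_mul, Finset.sum_add_distrib, Finset.sum_neg_distrib, neg_add_rev, neg_sub]
  ring
end

section
/- Let 1 ≤ m ≤ d ≤ r ≤ n, 𝐈 ∈ Subsets(r,n,s), 𝐉 ∈ Subsets(d,r,s) and 𝐊 ∈ Subsets(m,d,s). Then edim(𝐈^𝐉 𝐊) − edim 𝐊 = edim(𝐈𝐉𝐊) − edim(𝐉𝐊). -/
open Module

/-- `edim(𝐈^𝐉 𝐊) - edim 𝐊 = edim(𝐈𝐉𝐊) - edim(𝐉𝐊)`, where
`𝐈^𝐉(k) = 𝐈(𝐉(k)) - 𝐉(k) + k ∈ Subsets(d, n-r+d, s)`. -/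
theorem edim_exp_formula (s m d r n : ℕ) (hs : 2 ≤ s) (hm : 1 ≤ m)
    (hmd : m ≤ d) (hdr : d ≤ r) (hrn : r ≤ n)
    (I : Fin s → Fin r → Fin n) (hI : ∀ l, StrictMono (I l))
    (J : Fin s → Fin d → Fin r) (hJ : ∀ l, StrictMono (J l))
    (K : Fin s → Fin m → Fin d) (hK : ∀ l, StrictMono (K l)) :
    edimN (n - r + d)
        (fun l k => (I l (J l (K l k)) : ℕ) - (J l (K l k) : ℕ) + (K l k : ℕ))
      - edimN d (fun l k => ((K l k : ℕ))) =
    edimN n (fun l k => ((I l (J l (K l k)) : ℕ)))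
      - edimN r (fun l k => ((J l (K l k) : ℕ))) := by
  have hle : ∀ (l : Fin s) (x : Fin r), (x : ℕ) ≤ (I l x : ℕ) := by
    intro l x
    obtain ⟨j, hj⟩ := x
    induction j with
    | zero => exact Nat.zero_le _
    | succ j ih =>
      have h1 : (I l ⟨j, Nat.lt_of_succ_lt hj⟩ : ℕ) < (I l ⟨j + 1, hj⟩ : ℕ) := by
        exact_mod_cast hI l (by simp [Fin.lt_def])
      have := ih (Nat.lt_of_succ_lt hj)
      simp only [Fin.val_mk] at this h1 ⊢
      omega
  have hnr : ((n - r + d : ℕ) : ℤ) = (n : ℤ) - r + d := by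
    have : ((n - r : ℕ) : ℤ) = (n : ℤ) - r := by
      rw [Nat.cast_sub hrn]
    push_cast [this]; ring
  have hdim : ∀ l : Fin s,
      dimN (fun k => (I l (J l (K l k)) : ℕ) - (J l (K l k) : ℕ) + (K l k : ℕ)) =
      dimN (fun k => ((I l (J l (K l k)) : ℕ))) - dimN (fun k => ((J l (K l k) : ℕ)))
        + dimN (fun k : Fin m => ((K l k : ℕ))) := by
    intro l
    unfold dimN
    rw [← Finset.sum_sub_distrib, ← Finset.sum_add_distrib]
    apply Finset.sum_congr rfl
    intro k _
    have h := hle l (J l (K l k))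
    have : (((I l (J l (K l k)) : ℕ) - (J l (K l k) : ℕ) + (K l k : ℕ) : ℕ) : ℤ)
        = (I l (J l (K l k)) : ℤ) - (J l (K l k) : ℤ) + (K l k : ℤ) := by
      push_cast [Nat.cast_sub h]
      ring
    rw [this]
    ring
  unfold edimN
  simp only [Finset.sum_sub_distrib, Finset.sum_const, Finset.card_univ, Fintype.card_fin,
    nsmul_eq_mul, hnr, hdim]
  simp only [Finset.sum_add_distrib, Finset.sum_sub_distrib]
  ring
end
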